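/- Suppose T satisfies the First Extrapolation Condition (commutative form). Then there is an absolute constant c > 0 such that for every x ∈ (L₁ ∩ L∞)(X,ν), sup_{t>0} (1/φ(t)) ∫_0^t μ(s,Tx) ds ≤ c · max{‖x‖₁, ‖x‖_∞}; that is, T maps (L₁ ∩ L∞)(X,ν) boundedly into the Marcinkiewicz space M_φ(Y,ω) with an absolute bound. -/

import Mathlib

open MeasureTheory ENNReal Set

universe u v

/-- The decreasing rearrangement `μ(t, f)`. -/
noncomputable def mu {X : Type*} [MeasurableSpace X] (ν : Measure X) (f : X → ℝ) (t : ℝ) : ℝ≥0∞ :=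
  sInf (ENNReal.ofReal '' {s : ℝ | 0 ≤ s ∧ ν {u | s < |f u|} ≤ ENNReal.ofReal t})

/-- The concave function `φ(t) = t log(e²/t)` for `0 < t ≤ 1`, `φ(t) = log(e² t)` for `t > 1`. -/
noncomputable def phi (t : ℝ) : ℝ :=
  if t ≤ 1 then t * Real.log (Real.exp 2 / t) else Real.log (Real.exp 2 * t)

/-!
For `p > 1` and a level `σ₀ > 0`, Fubini's theorem applied to `{(s, σ) : s < ω{|f| > σ}}` gives
`∫₀ᵗ μ(s, f) ds ≤ t σ₀ + ∫_{σ₀}^∞ ω{|f| > σ} dσ`, and the layer-cake formula bounds the tail by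
`σ₀^{1-p} ‖f‖_p^p`. With `σ₀ = ‖f‖_p t^{-1/p}` this is `2 ‖f‖_p t^{1-1/p}`. For `f = Tx` the
hypothesis and `‖x‖_p ≤ max(‖x‖₁, ‖x‖_∞)` bound `‖f‖_p` by `max(p, p') max(‖x‖₁, ‖x‖_∞)`, where
`p' = p/(p-1)`, and the choice `max(p, p') = log(e²/t)` for `t ≤ 1`, `max(p, p') = log(e² t)` for
`t > 1` makes `2 max(p, p') t^{1-1/p} ≤ 2e φ(t) ≤ 6 φ(t)`.
-/

lemma eLpNorm_le_max_eLpNorm_one_top {X E : Type*} [MeasurableSpace X] [NormedAddCommGroup E]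
    {ν : Measure X} (x : X → E) {p : ℝ} (hp : 1 ≤ p) :
    eLpNorm x (ENNReal.ofReal p) ν ≤ max (eLpNorm x 1 ν) (eLpNorm x ∞ ν) := by
  set M := max (eLpNorm x 1 ν) (eLpNorm x ∞ ν)
  rcases eq_or_ne M ⊤ with hM | hM
  · exact hM ▸ le_top
  have hp₀ : 0 < p := by linarith
  have hsplit : ∀ y : ℝ≥0∞, y ^ p = y ^ (p - 1) * y := fun y => by
    simpa using ENNReal.rpow_add_of_nonneg (x := y) (p - 1) 1 (by linarith) zero_le_one
  have hx_le : ∀ᵐ u ∂ν, ‖x u‖ₑ ≤ M := by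
    filter_upwards [enorm_ae_le_eLpNormEssSup x ν] with u hu
    exact hu.trans (eLpNorm_exponent_top (f := x) ▸ le_max_right _ _)
  have hM_pow : ∫⁻ u, ‖x u‖ₑ ^ p ∂ν ≤ M ^ p := calc
    ∫⁻ u, ‖x u‖ₑ ^ p ∂ν ≤ ∫⁻ u, M ^ (p - 1) * ‖x u‖ₑ ∂ν := by
        refine lintegral_mono_ae (hx_le.mono fun u hu => ?_)
        calc ‖x u‖ₑ ^ p = ‖x u‖ₑ ^ (p - 1) * ‖x u‖ₑ := hsplit _
          _ ≤ M ^ (p - 1) * ‖x u‖ₑ := by gcongr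
    _ = M ^ (p - 1) * eLpNorm x 1 ν := by
        rw [lintegral_const_mul' _ _ (ENNReal.rpow_ne_top_of_nonneg (by linarith) hM),
          eLpNorm_one_eq_lintegral_enorm]
    _ ≤ M ^ (p - 1) * M := by gcongr; exact le_max_left _ _
    _ = M ^ p := (hsplit M).symm
  rw [eLpNorm_eq_lintegral_rpow_enorm_toReal (by simpa using hp₀) ofReal_ne_top,
    ENNReal.toReal_ofReal hp₀.le]
  calc (∫⁻ u, ‖x u‖ₑ ^ p ∂ν) ^ (1 / p) ≤ (M ^ p) ^ (1 / p) := by gcongr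
    _ = M := by rw [← ENNReal.rpow_mul, mul_one_div_cancel hp₀.ne', ENNReal.rpow_one]

lemma rpow_le_three_of_log_mul_le_one {t y : ℝ} (ht : 0 < t) (h : Real.log t * y ≤ 1) :
    t ^ y ≤ 3 := by
  rw [Real.rpow_def_of_pos ht]
  exact (Real.exp_le_exp.mpr h).trans (Real.exp_one_lt_d9.le.trans (by norm_num))

lemma exists_exponent_of_le_one {t : ℝ} (ht₀ : 0 < t) (ht₁ : t ≤ 1) :
    ∃ p : ℝ, 1 < p ∧ 2 * max p (p / (p - 1)) * t ^ (1 - 1 / p) ≤ 6 * phi t := by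
  have hlog : Real.log t ≤ 0 := Real.log_nonpos ht₀.le ht₁
  set p := 2 - Real.log t
  have hp : 2 ≤ p := by linarith
  refine ⟨p, by linarith, ?_⟩
  have hmax : max p (p / (p - 1)) = p :=
    max_eq_left ((div_le_iff₀ (by linarith)).mpr (by nlinarith))
  have hphi : phi t = t * p := by
    rw [phi, if_pos ht₁, Real.log_div (Real.exp_ne_zero 2) ht₀.ne', Real.log_exp]
  have hpow : t ^ (1 - 1 / p) = t * t ^ (-(1 / p)) := by
    rw [sub_eq_add_neg, Real.rpow_add ht₀, Real.rpow_one]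
  have hbound : t ^ (-(1 / p)) ≤ 3 := rpow_le_three_of_log_mul_le_one ht₀ <| by
    rw [mul_neg, ← neg_mul, ← div_eq_mul_one_div, div_le_one (by linarith)]
    linarith
  rw [hmax, hphi, hpow]
  nlinarith [mul_le_mul_of_nonneg_left hbound (by positivity : (0 : ℝ) ≤ 2 * p * t)]

lemma exists_exponent_of_one_lt {t : ℝ} (ht : 1 < t) :
    ∃ p : ℝ, 1 < p ∧ 2 * max p (p / (p - 1)) * t ^ (1 - 1 / p) ≤ 6 * phi t := by
  have hlog : 0 < Real.log t := Real.log_pos ht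
  set L := 2 + Real.log t
  have hL : 2 < L := by linarith
  have hL₁ : L - 1 ≠ 0 := by linarith
  refine ⟨L / (L - 1), (one_lt_div (by linarith)).mpr (by linarith), ?_⟩
  have hconj : L / (L - 1) / (L / (L - 1) - 1) = L := by
    field_simp
    ring
  have hmax : max (L / (L - 1)) L = L :=
    max_eq_right ((div_le_iff₀ (by linarith)).mpr (by nlinarith))
  have hphi : phi t = L := by
    rw [phi, if_neg ht.not_ge, Real.log_mul (Real.exp_ne_zero 2) (by linarith), Real.log_exp]
  have hexp : 1 - 1 / (L / (L - 1)) = 1 / L := by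
    field_simp
    ring
  have hbound : t ^ (1 / L) ≤ 3 := rpow_le_three_of_log_mul_le_one (by linarith) <| by
    rw [← div_eq_mul_one_div, div_le_one (by linarith)]
    linarith
  rw [hconj, hmax, hphi, hexp]
  nlinarith

lemma exists_exponent_mul_rpow_le_phi {t : ℝ} (ht : 0 < t) :
    ∃ p : ℝ, 1 < p ∧ 2 * max p (p / (p - 1)) * t ^ (1 - 1 / p) ≤ 6 * phi t :=
  (le_or_gt t 1).elim (exists_exponent_of_le_one ht) exists_exponent_of_one_lt

section Rearrangement

variable {Y : Type*} [MeasurableSpace Y] (ω : Measure Y) (f : Y → ℝ)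

lemma mu_le_ofReal {s σ : ℝ} (hσ : 0 ≤ σ) (h : ω {u | σ < |f u|} ≤ ENNReal.ofReal s) :
    mu ω f s ≤ ENNReal.ofReal σ :=
  sInf_le ⟨σ, ⟨hσ, h⟩, rfl⟩

lemma mu_eq_zero_of_ae_eq_zero (hf : f =ᵐ[ω] 0) (s : ℝ) : mu ω f s = 0 := by
  have hsupp : ω {u | 0 < |f u|} = 0 :=
    measure_mono_null (fun u hu => by simpa using hu) (ae_iff.mp hf)
  simpa using mu_le_ofReal ω f le_rfl (hsupp.trans_le zero_le : _ ≤ ENNReal.ofReal s)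

lemma antitone_measure_lt_abs : Antitone fun σ : ℝ => ω {u | σ < |f u|} :=
  fun _ _ hab => measure_mono fun _ hu => hab.trans_lt hu

lemma mu_le_volume_setOf_lt_measure (s : ℝ) :
    mu ω f s ≤ volume.restrict (Ioi 0) {σ : ℝ | ENNReal.ofReal s < ω {u | σ < |f u|}} := by
  set A := {σ : ℝ | ENNReal.ofReal s < ω {u | σ < |f u|}}
  refine le_of_forall_gt_imp_ge_of_dense fun c hc => ?_
  rcases eq_or_ne c ⊤ with rfl | hc_top
  · exact le_top
  have hb : 0 < c.toReal := ENNReal.toReal_pos (pos_of_gt hc).ne' hc_top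
  rw [← ENNReal.ofReal_toReal hc_top] at hc ⊢
  refine mu_le_ofReal ω f hb.le (not_lt.mp fun hbA => hc.not_ge ?_)
  calc ENNReal.ofReal c.toReal = volume (Ioo 0 c.toReal) := by simp
    _ ≤ volume.restrict (Ioi 0) A := by
      rw [Measure.restrict_apply' measurableSet_Ioi]
      exact measure_mono fun σ hσ =>
        ⟨hbA.trans_le (antitone_measure_lt_abs ω f hσ.2.le), hσ.1⟩

lemma volume_restrict_Ioc_setOf_lt_le (t : ℝ) (a : ℝ≥0∞) :
    volume.restrict (Ioc 0 t) {s : ℝ | ENNReal.ofReal s < a} ≤ min (ENNReal.ofReal t) a := by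
  rw [Measure.restrict_apply' measurableSet_Ioc]
  refine le_min ((measure_mono inter_subset_right).trans (by simp)) ?_
  rcases eq_or_ne a ⊤ with rfl | ha
  · exact le_top
  calc volume ({s : ℝ | ENNReal.ofReal s < a} ∩ Ioc 0 t) ≤ volume (Ioo 0 a.toReal) :=
        measure_mono fun s ⟨hsa, hs, _⟩ => ⟨hs, (ENNReal.ofReal_lt_iff_lt_toReal hs.le ha).mp hsa⟩
    _ = a := by simp [ha]

lemma lintegral_mu_le_lintegral_min (t : ℝ) :
    ∫⁻ s in Ioc 0 t, mu ω f s ≤ ∫⁻ σ in Ioi 0, min (ENNReal.ofReal t) (ω {u | σ < |f u|}) := by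
  set S := {q : ℝ × ℝ | ENNReal.ofReal q.1 < ω {u | q.2 < |f u|}}
  have hS : MeasurableSet S := measurableSet_lt (ENNReal.measurable_ofReal.comp measurable_fst)
    ((antitone_measure_lt_abs ω f).measurable.comp measurable_snd)
  calc ∫⁻ s in Ioc 0 t, mu ω f s
      ≤ ∫⁻ s in Ioc 0 t, volume.restrict (Ioi 0) (Prod.mk s ⁻¹' S) :=
        lintegral_mono fun s => mu_le_volume_setOf_lt_measure ω f s
    _ = ∫⁻ σ in Ioi 0, volume.restrict (Ioc 0 t) ((fun s => (s, σ)) ⁻¹' S) := by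
        rw [← Measure.prod_apply hS, Measure.prod_apply_symm hS]
    _ ≤ _ := lintegral_mono fun σ => volume_restrict_Ioc_setOf_lt_le t _

lemma lintegral_mu_le_add_lintegral_Ioi (t : ℝ) {σ₀ : ℝ} (hσ₀ : 0 ≤ σ₀) :
    ∫⁻ s in Ioc 0 t, mu ω f s ≤
      ENNReal.ofReal t * ENNReal.ofReal σ₀ + ∫⁻ σ in Ioi σ₀, ω {u | σ < |f u|} := by
  refine (lintegral_mu_le_lintegral_min ω f t).trans ?_
  rw [← Ioc_union_Ioi_eq_Ioi hσ₀, lintegral_union measurableSet_Ioi (Ioc_disjoint_Ioi le_rfl)]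
  gcongr
  · calc _ ≤ ∫⁻ _ in Ioc 0 σ₀, ENNReal.ofReal t := lintegral_mono fun _ => min_le_left _ _
      _ = _ := by simp
  · exact min_le_right _ _

lemma lintegral_ofReal_abs_rpow_eq {p : ℝ} (hp : 0 < p) :
    ∫⁻ u, ENNReal.ofReal (|f u| ^ p) ∂ω = eLpNorm f (ENNReal.ofReal p) ω ^ p := by
  rw [eLpNorm_eq_eLpNorm' (by simpa using hp) ofReal_ne_top, ENNReal.toReal_ofReal hp.le,
    ← lintegral_rpow_enorm_eq_rpow_eLpNorm' hp]
  simp_rw [Real.enorm_eq_ofReal_abs, ENNReal.ofReal_rpow_of_nonneg (abs_nonneg _) hp.le]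

lemma lintegral_Ioi_measure_lt_abs_le {p σ₀ : ℝ} (hp : 1 ≤ p) (hσ₀ : 0 < σ₀)
    (hf : AEMeasurable f ω) :
    ∫⁻ σ in Ioi σ₀, ω {u | σ < |f u|} ≤
      ENNReal.ofReal (σ₀ ^ (1 - p)) * eLpNorm f (ENNReal.ofReal p) ω ^ p := by
  have hp₀ : 0 < p := by linarith
  have layer_cake := lintegral_rpow_eq_lintegral_meas_lt_mul (μ := ω)
    (ae_of_all _ fun u => abs_nonneg (f u)) hf.abs hp₀
  rw [lintegral_ofReal_abs_rpow_eq ω f hp₀] at layer_cake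
  have weight_ge_one : ∀ σ ∈ Ioi σ₀,
      1 ≤ ENNReal.ofReal (σ₀ ^ (1 - p)) * ENNReal.ofReal (σ ^ (p - 1)) := by
    intro σ hσ
    rw [← ENNReal.ofReal_mul (by positivity), ENNReal.one_le_ofReal, show 1 - p = -(p - 1) by ring,
      Real.rpow_neg hσ₀.le, inv_mul_eq_div, ← Real.div_rpow (hσ₀.trans hσ).le hσ₀.le]
    exact Real.one_le_rpow ((one_le_div hσ₀).mpr (le_of_lt hσ)) (by linarith)
  calc ∫⁻ σ in Ioi σ₀, ω {u | σ < |f u|}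
      ≤ ∫⁻ σ in Ioi σ₀, ENNReal.ofReal (σ₀ ^ (1 - p)) *
          (ω {u | σ < |f u|} * ENNReal.ofReal (σ ^ (p - 1))) :=
        setLIntegral_mono' measurableSet_Ioi fun σ hσ => by
          rw [← mul_assoc, mul_right_comm]
          exact le_mul_of_one_le_left' (weight_ge_one σ hσ)
    _ ≤ ENNReal.ofReal (σ₀ ^ (1 - p)) *
          ∫⁻ σ in Ioi 0, ω {u | σ < |f u|} * ENNReal.ofReal (σ ^ (p - 1)) := by
        rw [lintegral_const_mul' _ _ ofReal_ne_top]
        gcongr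
    _ ≤ _ := by
        rw [layer_cake]
        gcongr
        exact le_mul_of_one_le_left' (ENNReal.one_le_ofReal.mpr hp)

lemma lintegral_mu_le_of_eLpNorm_le {p t a : ℝ} (hp : 1 < p) (ht : 0 < t) (ha : 0 ≤ a)
    (hf : AEMeasurable f ω) (hfa : eLpNorm f (ENNReal.ofReal p) ω ≤ ENNReal.ofReal a) :
    ∫⁻ s in Ioc 0 t, mu ω f s ≤ ENNReal.ofReal (2 * a * t ^ (1 - 1 / p)) := by
  have hp₀ : 0 < p := by linarith
  rcases ha.eq_or_lt with rfl | ha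
  · rw [ENNReal.ofReal_zero, nonpos_iff_eq_zero,
      eLpNorm_eq_zero_iff hf.aestronglyMeasurable (by simpa using hp₀)] at hfa
    simp [mu_eq_zero_of_ae_eq_zero ω f hfa]
  set σ₀ := a * t ^ (-(1 / p))
  have hσ₀ : 0 < σ₀ := by positivity
  have balance : t * σ₀ + σ₀ ^ (1 - p) * a ^ p = 2 * a * t ^ (1 - 1 / p) := by
    have h₁ : t * σ₀ = a * t ^ (1 - 1 / p) := by
      rw [sub_eq_add_neg, Real.rpow_add ht, Real.rpow_one]; ring
    have h₂ : σ₀ ^ (1 - p) * a ^ p = a * t ^ (1 - 1 / p) := by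
      rw [Real.mul_rpow ha.le (by positivity), ← Real.rpow_mul ht.le, mul_right_comm,
        ← Real.rpow_add ha, show -(1 / p) * (1 - p) = 1 - 1 / p by field_simp; ring]
      norm_num
    rw [h₁, h₂]; ring
  calc ∫⁻ s in Ioc 0 t, mu ω f s
      ≤ ENNReal.ofReal t * ENNReal.ofReal σ₀ + ∫⁻ σ in Ioi σ₀, ω {u | σ < |f u|} :=
        lintegral_mu_le_add_lintegral_Ioi ω f t hσ₀.le
    _ ≤ ENNReal.ofReal t * ENNReal.ofReal σ₀ +
          ENNReal.ofReal (σ₀ ^ (1 - p)) * ENNReal.ofReal a ^ p := by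
        grw [lintegral_Ioi_measure_lt_abs_le ω f hp.le hσ₀ hf, hfa]
    _ = ENNReal.ofReal (2 * a * t ^ (1 - 1 / p)) := by
        rw [ENNReal.ofReal_rpow_of_nonneg ha.le hp₀.le, ← ENNReal.ofReal_mul ht.le,
          ← ENNReal.ofReal_mul (by positivity), ← ENNReal.ofReal_add (by positivity)
          (by positivity), balance]

end Rearrangement

/-- If `T` satisfies the First Extrapolation Condition (commutative form), then there is an
absolute constant `c > 0` such that for every `x ∈ L₁ ∩ L∞`,
`sup_{t>0} (1/φ(t)) ∫_0^t μ(s,Tx) ds ≤ c max{‖x‖₁, ‖x‖∞}`. -/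
theorem stmt_9 :
    ∃ c : ℝ, 0 < c ∧
      ∀ (X : Type u) (Y : Type v) [MeasurableSpace X] [MeasurableSpace Y]
        (ν : Measure X) (ω : Measure Y), SigmaFinite ν → SigmaFinite ω →
      ∀ T : (X → ℝ) → (Y → ℝ),
        (∀ x y : X → ℝ, MemLp x 1 ν → MemLp x ∞ ν → MemLp y 1 ν → MemLp y ∞ ν →
          T (x + y) =ᵐ[ω] T x + T y) →
        (∀ (a : ℝ) (x : X → ℝ), MemLp x 1 ν → MemLp x ∞ ν → T (a • x) =ᵐ[ω] a • T x) →
        (∀ p : ℝ, 1 < p → ∀ x : X → ℝ, MemLp x 1 ν → MemLp x ∞ ν →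
          MemLp (T x) (ENNReal.ofReal p) ω ∧
          eLpNorm (T x) (ENNReal.ofReal p) ω ≤
            ENNReal.ofReal (max p (p / (p - 1))) * eLpNorm x (ENNReal.ofReal p) ν) →
      ∀ x : X → ℝ, MemLp x 1 ν → MemLp x ∞ ν →
        (⨆ (t : ℝ) (_ : 0 < t),
            (∫⁻ s in Ioc (0:ℝ) t, mu ω (T x) s) / ENNReal.ofReal (phi t)) ≤
          ENNReal.ofReal c * max (eLpNorm x 1 ν) (eLpNorm x ∞ ν) := by
  refine ⟨6, by norm_num, fun X Y _ _ ν ω _ _ T _ _ hT x hx₁ hx_top => ?_⟩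
  set M := max (eLpNorm x 1 ν) (eLpNorm x ∞ ν)
  have hM : M ≠ ⊤ := (max_lt hx₁.eLpNorm_lt_top hx_top.eLpNorm_lt_top).ne
  refine iSup₂_le fun t ht => ENNReal.div_le_of_le_mul ?_
  obtain ⟨p, hp, hp_phi⟩ := exists_exponent_mul_rpow_le_phi ht
  set C := max p (p / (p - 1))
  have hC : 0 ≤ C := by positivity
  obtain ⟨hTx, hTx_le⟩ := hT p hp x hx₁ hx_top
  have hTx_M : eLpNorm (T x) (ENNReal.ofReal p) ω ≤ ENNReal.ofReal (C * M.toReal) := by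
    grw [hTx_le, eLpNorm_le_max_eLpNorm_one_top x hp.le,
      ENNReal.ofReal_mul hC, ENNReal.ofReal_toReal hM]
  calc ∫⁻ s in Ioc 0 t, mu ω (T x) s
      ≤ ENNReal.ofReal (2 * (C * M.toReal) * t ^ (1 - 1 / p)) :=
        lintegral_mu_le_of_eLpNorm_le ω (T x) hp ht (by positivity)
          hTx.aestronglyMeasurable.aemeasurable hTx_M
    _ ≤ ENNReal.ofReal (6 * M.toReal * phi t) := ENNReal.ofReal_le_ofReal <| by
        nlinarith [mul_le_mul_of_nonneg_right hp_phi (toReal_nonneg : 0 ≤ M.toReal)]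
    _ = ENNReal.ofReal 6 * M * ENNReal.ofReal (phi t) := by
        rw [ENNReal.ofReal_mul (by positivity), ENNReal.ofReal_mul (by norm_num),
          ENNReal.ofReal_toReal hM]
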